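/- arXiv:1602.00518 — 4 statements merged into one kernel-verified Lean document; each statement's English description precedes it below -/
import Mathlib

section
/- For odd n ≥ 3, arccos(1/√n) is not a rational multiple of π. -/
/-!
Put `θ = arccos (1 / √n)`. The integers `a k = scaledCos n k` defined by `a 0 = a 1 = 1` and
`a (k + 2) = 2 a (k + 1) - n a k` satisfy `a k = √n ^ k cos (k θ)`, and `a (k + 1) ≡ 2 ^ k`
modulo `n`. If `θ = q π` with `q` rational of denominator `d`, then `cos (2 d θ) = 1`, so
`n ^ d = a (2 d) ≡ 2 ^ (2 d - 1)` modulo `n`. Hence `n ∣ 2 ^ (2 d - 1)`, impossible for odd `n ≥ 3`.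
-/

open Real

def scaledCos (n : ℤ) : ℕ → ℤ
  | 0 => 1
  | 1 => 1
  | k + 2 => 2 * scaledCos n (k + 1) - n * scaledCos n k

theorem scaledCos_succ_modEq (n : ℤ) : ∀ k : ℕ, scaledCos n (k + 1) ≡ 2 ^ k [ZMOD n]
  | 0 => rfl
  | k + 1 => by
    have h := ((scaledCos_succ_modEq n k).mul_left 2).sub
      (Int.modEq_zero_iff_dvd.2 (dvd_mul_right n (scaledCos n k)))
    rwa [sub_zero, ← pow_succ'] at h

theorem cos_add_two_mul (θ x : ℝ) : cos (x + 2 * θ) = 2 * cos θ * cos (x + θ) - cos x := by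
  have h := cos_add_cos (x + 2 * θ) x
  rw [show (x + 2 * θ + x) / 2 = x + θ by ring, show (x + 2 * θ - x) / 2 = θ by ring] at h
  linarith

theorem scaledCos_eq {n : ℤ} {s θ : ℝ} (hs : s ^ 2 = n) (hθ : s * cos θ = 1) :
    ∀ k : ℕ, (scaledCos n k : ℝ) = s ^ k * cos (k * θ)
  | 0 => by simp [scaledCos]
  | 1 => by simp [scaledCos, hθ]
  | k + 2 => by
    have hcos := cos_add_two_mul θ (k * θ)
    rw [show (k : ℝ) * θ + θ = (k + 1 : ℕ) * θ by push_cast; ring,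
      show (k : ℝ) * θ + 2 * θ = (k + 2 : ℕ) * θ by push_cast; ring] at hcos
    simp only [scaledCos, Int.cast_sub, Int.cast_mul, Int.cast_ofNat,
      scaledCos_eq hs hθ k, scaledCos_eq hs hθ (k + 1), hcos, ← hs]
    linear_combination (-2 * s ^ (k + 1) * cos ((k + 1 : ℕ) * θ)) * hθ

theorem scaledCos_two_mul_eq_pow {n : ℤ} {s θ : ℝ} (hs : s ^ 2 = n) (hθ : s * cos θ = 1)
    {m : ℕ} (h : cos ((2 * m : ℕ) * θ) = 1) : scaledCos n (2 * m) = n ^ m := by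
  have := scaledCos_eq hs hθ (2 * m)
  rw [h, mul_one, pow_mul, hs] at this
  exact_mod_cast this

theorem cos_two_den_mul_rat_mul_pi (q : ℚ) : cos ((2 * q.den : ℕ) * (q * π)) = 1 := by
  have hq : (q : ℝ) * q.den = q.num := by exact_mod_cast Rat.mul_den_eq_num q
  rw [show ((2 * q.den : ℕ) : ℝ) * (q * π) = q.num * (2 * π) by push_cast; rw [← hq]; ring]
  exact cos_int_mul_two_pi q.num

theorem sqrt_mul_cos_arccos_one_div_sqrt {x : ℝ} (hx : 1 ≤ x) :
    √x * cos (arccos (1 / √x)) = 1 := by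
  have hs1 : 1 ≤ √x := one_le_sqrt.2 hx
  have hs0 : 0 < √x := zero_lt_one.trans_le hs1
  rw [cos_arccos (by linarith [one_div_pos.2 hs0]) ((div_le_one hs0).2 hs1)]
  field_simp

theorem arccos_one_div_sqrt_irrational (n : ℕ) (hn : 3 ≤ n) (hodd : Odd n) :
    ¬ ∃ q : ℚ, Real.arccos (1 / Real.sqrt n) = q * Real.pi := by
  rintro ⟨q, hq⟩
  have hs : √(n : ℝ) ^ 2 = (n : ℤ) := by push_cast; exact sq_sqrt n.cast_nonneg
  have hθ := sqrt_mul_cos_arccos_one_div_sqrt (x := n) (by exact_mod_cast (by omega : 1 ≤ n))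
  obtain ⟨m, hm⟩ := Nat.exists_eq_succ_of_ne_zero q.den_nz
  have hpow := scaledCos_two_mul_eq_pow hs hθ (hq ▸ cos_two_den_mul_rat_mul_pi q)
  have hmod := scaledCos_succ_modEq (n : ℤ) (2 * m + 1)
  rw [show 2 * m + 1 + 1 = 2 * q.den by omega, hpow] at hmod
  have hdvd : n ∣ 2 ^ (2 * m + 1) := by
    exact_mod_cast Int.modEq_zero_iff_dvd.1
      (hmod.symm.trans (Int.modEq_zero_iff_dvd.2 (dvd_pow_self _ q.den_nz)))
  have : n = 1 := (hodd.coprime_two_right.pow_right _).eq_one_of_dvd hdvd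
  omega
end

section
/- The angle 2·arctan(1/2) is not a rational multiple of π. -/
open Real

theorem Real.cos_two_mul_arctan (x : ℝ) : cos (2 * arctan x) = (1 - x ^ 2) / (1 + x ^ 2) := by
  rw [cos_two_mul, cos_sq_arctan]
  field_simp
  ring

theorem pinwheel_angle_irrational :
    ¬ ∃ q : ℚ, 2 * Real.arctan (1 / 2) = q * Real.pi := by
  intro hrat
  have hcos : cos (2 * arctan (1 / 2)) = (3 / 5 : ℚ) := by
    rw [cos_two_mul_arctan]
    norm_num
  have hniven := niven hrat ⟨_, hcos⟩
  rw [hcos] at hniven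
  norm_num at hniven
end

section
/- Let M be the 6×6 matrix with rows (1,0,0,0,2,4), (8,5,0,0,0,0), (32,4,0,0,25,24), (16,0,0,0,12,17), (0,0,1,0,0,0), (0,0,0,1,0,0). Then 5 + 2√2 is an eigenvalue of M. -/
/-!
Write the candidate eigenvector as `a + √2 • b` with integer vectors `a`, `b`. Since
`(5 + 2√2)(a + √2 b) = (5a + 4b) + √2 (2a + 5b)`, the eigenvalue equation follows from the two
integer identities `M a = 5a + 4b` and `M b = 2a + 5b`, checked entrywise.
-/

open Matrix

theorem Matrix.mulVec_add_smul_eq_smul_of_sq_eq {n R : Type*} [Fintype n] [CommRing R]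
    (M : Matrix n n R) {a b : n → R} {p q s d : R} (hs : s ^ 2 = d)
    (ha : M *ᵥ a = p • a + (q * d) • b) (hb : M *ᵥ b = q • a + p • b) :
    M *ᵥ (a + s • b) = (p + q * s) • (a + s • b) := by
  rw [mulVec_add, mulVec_smul, ha, hb, ← hs]
  module

theorem sigma8_matrix_eigenvalue :
    ∃ v : Fin 6 → ℝ, v ≠ 0 ∧
      (!![1, 0, 0, 0, 2, 4; 8, 5, 0, 0, 0, 0; 32, 4, 0, 0, 25, 24;
          16, 0, 0, 0, 12, 17; 0, 0, 1, 0, 0, 0; 0, 0, 0, 1, 0, 0] :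
        Matrix (Fin 6) (Fin 6) ℝ).mulVec v = (5 + 2 * Real.sqrt 2) • v := by
  set M : Matrix (Fin 6) (Fin 6) ℝ := !![1, 0, 0, 0, 2, 4; 8, 5, 0, 0, 0, 0;
    32, 4, 0, 0, 25, 24; 16, 0, 0, 0, 12, 17; 0, 0, 1, 0, 0, 0; 0, 0, 0, 1, 0, 0]
  set a : Fin 6 → ℝ := ![5, 0, 16, 27, -4, 7]
  set b : Fin 6 → ℝ := ![0, 10, 37, 4, 9, -2]
  have ha : M *ᵥ a = (5 : ℝ) • a + (2 * 2 : ℝ) • b := by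
    ext i; fin_cases i <;> norm_num [M, a, b, mulVec, dotProduct, Fin.sum_univ_succ]
  have hb : M *ᵥ b = (2 : ℝ) • a + (5 : ℝ) • b := by
    ext i; fin_cases i <;> norm_num [M, a, b, mulVec, dotProduct, Fin.sum_univ_succ]
  refine ⟨a + Real.sqrt 2 • b, fun h => ?_, M.mulVec_add_smul_eq_smul_of_sq_eq
    (Real.sq_sqrt zero_le_two) ha hb⟩
  simpa [a, b] using congrFun h 0
end

section
/- Let n ≥ 3, let a, b be distinct positive rationals, and let z = a·e^{iπ/n} + b. Then arg(z) is not a rational multiple of π. -/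
/-!
Put `ζ = e^{iπ/n}`, a primitive `2n`-th root of unity, and `z = aζ + b`. If `arg z = qπ`, then
`ω = z / z̄ = e^{2 i arg z}` is a root of unity lying in `ℚ(ζ)`, because `z̄ = aζ⁻¹ + b`. Since
`2n` is even, the only roots of unity in the cyclotomic field `ℚ(ζ)` are `2n`-th roots of unity,
so `arg z ∈ (π / 2n) ℤ`. As `z` lies strictly inside the cone spanned by `1` and `ζ`, this forces
`arg z = π / 2n`, i.e. `ω = ζ`. But then `aζ + b = ζ (aζ⁻¹ + b) = a + bζ`, so `a = b`.
-/

open Complex Real IntermediateField Set ComplexConjugate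

open Polynomial in
theorem IsPrimitiveRoot.pow_eq_one_of_mem_adjoin_rat {K : Type*} [Field K] [CharZero K]
    {ζ ω : K} {k : ℕ} (hζ : IsPrimitiveRoot ζ k) (hk : Even k) (hk0 : k ≠ 0)
    (hω : IsOfFinOrder ω) (hmem : ω ∈ ℚ⟮ζ⟯) : ω ^ k = 1 := by
  have hζint : IsIntegral ℚ ζ := (hζ.isIntegral (Nat.pos_of_ne_zero hk0)).tower_top
  have : FiniteDimensional ℚ ℚ⟮ζ⟯ := adjoin.finiteDimensional hζint
  have hrank : Module.finrank ℚ ℚ⟮ζ⟯ = k.totient := by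
    rw [adjoin.finrank hζint, ← cyclotomic_eq_minpoly_rat hζ (Nat.pos_of_ne_zero hk0),
      natDegree_cyclotomic]
  set m := orderOf ω
  have hlcm_pos : 0 < k.lcm m := Nat.lcm_pos (Nat.pos_of_ne_zero hk0) hω.orderOf_pos
  have hinj := (algebraMap ℚ⟮ζ⟯ K).injective
  have hle : (k.lcm m).totient ≤ k.totient := hrank ▸
    IsPrimitiveRoot.lcm_totient_le_finrank (K := ℚ)
      (x := (⟨ζ, mem_adjoin_simple_self ℚ ζ⟩ : ℚ⟮ζ⟯)) (y := (⟨ω, hmem⟩ : ℚ⟮ζ⟯))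
      (hζ.of_map_of_injective hinj) ((IsPrimitiveRoot.orderOf ω).of_map_of_injective hinj)
      (cyclotomic.irreducible_rat hlcm_pos)
  have hge : k.totient ≤ (k.lcm m).totient :=
    Nat.le_of_dvd (Nat.totient_pos.2 hlcm_pos) (Nat.totient_dvd_of_dvd (Nat.dvd_lcm_left k m))
  have hlcm : k = k.lcm m :=
    hk.eq_of_totient_eq_totient (Nat.dvd_lcm_left k m) (le_antisymm hge hle)
  exact orderOf_dvd_iff_pow_eq_one.1 (hlcm ▸ Nat.dvd_lcm_right k m)

namespace Complex

theorem exp_two_mul_arg_mul_I_mul_conj (z : ℂ) : exp (2 * arg z * I) * conj z = z := by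
  have hconj : conj z = ‖z‖ * exp (-(arg z * I)) := by
    conv_lhs => rw [← norm_mul_exp_arg_mul_I z]
    rw [map_mul, conj_ofReal, ← exp_conj, map_mul, conj_ofReal, conj_I, mul_neg]
  rw [hconj, mul_left_comm, ← exp_add]
  conv_rhs => rw [← norm_mul_exp_arg_mul_I z]
  ring_nf

theorem isOfFinOrder_exp_two_mul_rat_mul_pi_mul_I (q : ℚ) :
    IsOfFinOrder (exp (2 * ((q * π : ℝ) : ℂ) * I)) := by
  refine isOfFinOrder_iff_pow_eq_one.2 ⟨q.den, q.den_pos, ?_⟩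
  rw [← exp_nat_mul, exp_eq_one_iff]
  refine ⟨q.num, ?_⟩
  have hq : (q.den : ℂ) * q = q.num := by exact_mod_cast Rat.den_mul_eq_num q
  push_cast
  linear_combination (2 * π * I) * hq

theorem exists_int_of_exp_mul_I_pow_eq_one {x : ℝ} {N : ℕ} (h : exp (x * I) ^ N = 1) :
    ∃ j : ℤ, N * x = 2 * π * j := by
  rw [← exp_nat_mul, exp_eq_one_iff] at h
  obtain ⟨j, hj⟩ := h
  exact ⟨j, by simpa [mul_comm, mul_left_comm, mul_assoc] using congrArg im hj⟩

theorem two_mul_eq_pi_div_of_exp_pow_eq_one {x : ℝ} {n : ℕ} (hx : x ∈ Ioo 0 (π / n))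
    (h : exp (2 * x * I) ^ (2 * n) = 1) : 2 * x = π / n := by
  have hn : (0 : ℝ) < n := by
    rcases Nat.eq_zero_or_pos n with rfl | h
    · simpa using hx.1.trans hx.2
    · exact_mod_cast h
  obtain ⟨j, hj⟩ := exists_int_of_exp_mul_I_pow_eq_one (x := 2 * x) (by push_cast; exact h)
  have hxj : 2 * n * x = π * j := by push_cast at hj; linarith
  have hj1 : j = 1 := by
    have h0 : (0 : ℝ) < j := by nlinarith [hx.1, pi_pos]
    have h2 : (j : ℝ) < 2 := by
      have := (lt_div_iff₀ hn).1 hx.2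
      nlinarith [pi_pos]
    have : (0 : ℤ) < j ∧ j < 2 := ⟨by exact_mod_cast h0, by exact_mod_cast h2⟩
    omega
  rw [hj1, Int.cast_one, mul_one] at hxj
  field_simp
  linarith

theorem arg_mul_exp_mul_I_add_mem_Ioo {θ a b : ℝ} (hθ : θ ∈ Ioo 0 (π / 2)) (ha : 0 < a)
    (hb : 0 < b) : arg (a * exp (θ * I) + b) ∈ Ioo 0 θ := by
  set z : ℂ := a * exp (θ * I) + b
  have hcos : 0 < Real.cos θ := cos_pos_of_mem_Ioo ⟨by linarith [hθ.1, pi_pos], hθ.2⟩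
  have hsin : 0 < Real.sin θ := sin_pos_of_pos_of_lt_pi hθ.1 (by linarith [hθ.2, pi_pos])
  have hre : z.re = a * Real.cos θ + b := by simp [z, exp_ofReal_mul_I_re]
  have him : z.im = a * Real.sin θ := by simp [z, exp_ofReal_mul_I_im]
  have hre_pos : 0 < z.re := by rw [hre]; positivity
  have harg : arg z = Real.arctan (z.im / z.re) := by
    obtain ⟨h₁, h₂⟩ := abs_lt.1 (abs_arg_lt_pi_div_two_iff.2 (Or.inl hre_pos))
    rw [← tan_arg z, Real.arctan_tan h₁ h₂]
  rw [harg, ← Real.arctan_zero, ← Real.arctan_tan (by linarith [hθ.1, pi_pos]) hθ.2]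
  constructor <;> apply arctan_strictMono
  · rw [him]; positivity
  · rw [Real.tan_eq_sin_div_cos, hre, him, div_lt_div_iff₀ (hre ▸ hre_pos) hcos]
    nlinarith [mul_pos hb hsin]

theorem eq_of_mul_add_eq_mul_conj {ζ : ℂ} {a b : ℝ} (hζ : ‖ζ‖ = 1) (hζ1 : ζ ≠ 1)
    (h : a * ζ + b = ζ * conj (a * ζ + b)) : a = b := by
  have hζζ : ζ * conj ζ = 1 := by rw [mul_conj', hζ]; simp
  have : ((a : ℂ) - b) * (ζ - 1) = 0 := by
    simp only [map_add, map_mul, conj_ofReal] at h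
    linear_combination h + a * hζζ
  exact_mod_cast sub_eq_zero.1 ((mul_eq_zero.1 this).resolve_right (sub_ne_zero.2 hζ1))

theorem isPrimitiveRoot_exp_pi_mul_I_div {n : ℕ} (hn : n ≠ 0) :
    IsPrimitiveRoot (exp (π * I / n)) (2 * n) := by
  convert isPrimitiveRoot_exp (2 * n) (by omega) using 2
  have hn0 : (n : ℂ) ≠ 0 := by exact_mod_cast hn
  push_cast
  field_simp

theorem exp_two_mul_arg_mul_I_mem_adjoin {ζ : ℂ} (hζ : ‖ζ‖ = 1) {a b : ℚ}
    (hz : (a : ℂ) * ζ + b ≠ 0) : exp (2 * arg (a * ζ + b) * I) ∈ ℚ⟮ζ⟯ := by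
  have hconj : conj ((a : ℂ) * ζ + b) = a * ζ⁻¹ + b := by simp [← inv_eq_conj hζ]
  rw [eq_div_of_mul_eq ((map_ne_zero _).2 hz) (exp_two_mul_arg_mul_I_mul_conj _), hconj]
  have hζmem : ζ ∈ ℚ⟮ζ⟯ := mem_adjoin_simple_self ℚ ζ
  have hrat (r : ℚ) : (r : ℂ) ∈ ℚ⟮ζ⟯ := SubfieldClass.ratCast_mem _ r
  exact div_mem (add_mem (mul_mem (hrat a) hζmem) (hrat b))
    (add_mem (mul_mem (hrat a) (inv_mem hζmem)) (hrat b))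

end Complex

theorem arg_irrational_general (n : ℕ) (hn : 3 ≤ n) (a b : ℚ)
    (ha : 0 < a) (hb : 0 < b) (hab : a ≠ b) :
    ¬ ∃ q : ℚ, Complex.arg ((a : ℂ) * Complex.exp (Real.pi * Complex.I / n) + (b : ℂ))
      = q * Real.pi := by
  rintro ⟨q, hq⟩
  set ζ : ℂ := exp (π * I / n) with hζdef
  set z : ℂ := a * ζ + b
  have hζ : IsPrimitiveRoot ζ (2 * n) := isPrimitiveRoot_exp_pi_mul_I_div (by omega)
  have hζθ : ζ = exp ((π / n : ℝ) * I) := by rw [hζdef]; push_cast; ring_nf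
  have hζnorm : ‖ζ‖ = 1 := by rw [hζθ, norm_exp_ofReal_mul_I]
  have harg : arg z ∈ Ioo 0 (π / n) := by
    have h2n : (2 : ℝ) < n := by exact_mod_cast (show 2 < n by omega)
    have hθ : π / n ∈ Ioo 0 (π / 2) := ⟨by positivity, div_lt_div_of_pos_left pi_pos two_pos h2n⟩
    have := arg_mul_exp_mul_I_add_mem_Ioo hθ (Rat.cast_pos.2 ha) (Rat.cast_pos.2 hb)
    rwa [← hζθ, ofReal_ratCast, ofReal_ratCast] at this
  have hω : exp (2 * arg z * I) ^ (2 * n) = 1 :=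
    hζ.pow_eq_one_of_mem_adjoin_rat (even_two_mul n) (by omega)
      (hq ▸ isOfFinOrder_exp_two_mul_rat_mul_pi_mul_I q)
      (exp_two_mul_arg_mul_I_mem_adjoin hζnorm fun h ↦ by simp [z, h] at harg)
  have hωζ : exp (2 * arg z * I) = ζ := by
    rw [hζθ, ← two_mul_eq_pi_div_of_exp_pow_eq_one harg hω]; push_cast; rfl
  have hz : z = ζ * conj z := by rw [← hωζ, exp_two_mul_arg_mul_I_mul_conj]
  have := eq_of_mul_add_eq_mul_conj (a := a) (b := b) hζnorm (hζ.ne_one (by omega))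
    (by push_cast; exact hz)
  exact hab (by exact_mod_cast this)
end
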